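/- (Pointwise transformation identity for the convective term.) Let h¹, h² be positive twice continuously differentiable real functions of y₁, and let u, ψ be continuously differentiable vector fields on an open subset of ℝ². Then at every point y = (y₁,y₂): h¹·( Rᵀ𝕁⁻¹·((F_{h¹}u)·∇)u )·ψ = ((h²)²/h¹)·( ((F_{h²}Ru)·∇)(Ru) )·(Rψ) − ((h²)²/h¹)·( (((F_{h²}Ru)·∇)R)·u )·(Rψ), where for a vector field w, ((w)·∇)z denotes the directional derivative of the vector field z along w (componentwise w₁∂_{y₁}z_i + w₂∂_{y₂}z_i), and ((w)·∇)R denotes the 2×2 matrix obtained by applying this directional derivative to each entry of R. -/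

import Mathlib

/-!
With `w = F_{h¹}u` and `W = F_{h²}(Ru)` one has `W = (h¹/h²) w` pointwise, because
`h²·∂(h¹/h²) + (h¹/h²)·∂h² = ∂h¹`. By the Leibniz rule `(W·∇)(Ru) = ((W·∇)R)u + R((W·∇)u)`,
so the right-hand side collapses to `h² (R v)·(R ψ)` with `v = (w·∇)u`. On the left,
`h¹𝕁⁻¹ = h²R` (from `(h¹)² ∂(h²/h¹) = -(h²)² ∂(h¹/h²)`), which gives the same quantity.
-/

open Matrix

/-- Partial derivative with respect to the first coordinate. -/
noncomputable def pd1 (f : ℝ × ℝ → ℝ) (y : ℝ × ℝ) : ℝ :=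
  deriv (fun t => f (t, y.2)) y.1

/-- Partial derivative with respect to the second coordinate. -/
noncomputable def pd2 (f : ℝ × ℝ → ℝ) (y : ℝ × ℝ) : ℝ :=
  deriv (fun t => f (y.1, t)) y.2

/-- Directional derivative `((w·∇)f)(y) = w₁∂_{y₁}f + w₂∂_{y₂}f` of a scalar
function `f` along the vector field `w = (w1, w2)`. -/
noncomputable def dirD (w1 w2 : ℝ × ℝ → ℝ) (f : ℝ × ℝ → ℝ) (y : ℝ × ℝ) : ℝ :=
  w1 y * pd1 f y + w2 y * pd2 f y

/-- First component of `F_h·u` with `F_h = (1/2)[[1,0],[−(y₂/h)∂h, 1/h]]`. -/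
noncomputable def FuFst (u1 : ℝ × ℝ → ℝ) : ℝ × ℝ → ℝ :=
  fun z => (1 / 2) * u1 z

/-- Second component of `F_h·u`. -/
noncomputable def FuSnd (h : ℝ → ℝ) (u1 u2 : ℝ × ℝ → ℝ) : ℝ × ℝ → ℝ :=
  fun z => (1 / 2) * (-(z.2 / h z.1) * deriv h z.1 * u1 z + u2 z / h z.1)

/-- First component of `Ru`. -/
noncomputable def RuFst (h1 h2 : ℝ → ℝ) (u1 : ℝ × ℝ → ℝ) : ℝ × ℝ → ℝ :=
  fun z => h1 z.1 / h2 z.1 * u1 z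

/-- Second component of `Ru`. -/
noncomputable def RuSnd (h1 h2 : ℝ → ℝ) (u1 u2 : ℝ × ℝ → ℝ) : ℝ × ℝ → ℝ :=
  fun z => u2 z - z.2 * h2 z.1 * deriv (fun x => h1 x / h2 x) z.1 * u1 z

section DirectionalDerivative

variable {f g : ℝ × ℝ → ℝ} {y : ℝ × ℝ}

theorem pd1_eq_fderiv (hf : DifferentiableAt ℝ f y) : pd1 f y = fderiv ℝ f y (1, 0) :=
  (hf.hasFDerivAt.comp_hasDerivAt y.1 ((hasDerivAt_id _).prodMk (hasDerivAt_const _ _))).deriv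

theorem pd2_eq_fderiv (hf : DifferentiableAt ℝ f y) : pd2 f y = fderiv ℝ f y (0, 1) :=
  (hf.hasFDerivAt.comp_hasDerivAt y.2 ((hasDerivAt_const _ _).prodMk (hasDerivAt_id _))).deriv

theorem dirD_eq_fderiv (w1 w2 : ℝ × ℝ → ℝ) (hf : DifferentiableAt ℝ f y) :
    dirD w1 w2 f y = fderiv ℝ f y (w1 y, w2 y) := by
  have hw : (w1 y, w2 y) = w1 y • ((1 : ℝ), (0 : ℝ)) + w2 y • ((0 : ℝ), (1 : ℝ)) := by simp
  rw [dirD, pd1_eq_fderiv hf, pd2_eq_fderiv hf, hw, map_add, map_smul, map_smul, smul_eq_mul,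
    smul_eq_mul]

theorem dirD_const (w1 w2 : ℝ × ℝ → ℝ) (c : ℝ) : dirD w1 w2 (fun _ => c) y = 0 := by
  simp [dirD, pd1, pd2]

theorem dirD_add (w1 w2 : ℝ × ℝ → ℝ) (hf : DifferentiableAt ℝ f y) (hg : DifferentiableAt ℝ g y) :
    dirD w1 w2 (fun z => f z + g z) y = dirD w1 w2 f y + dirD w1 w2 g y := by
  rw [dirD_eq_fderiv w1 w2 (hf.fun_add hg), dirD_eq_fderiv w1 w2 hf, dirD_eq_fderiv w1 w2 hg,
    fderiv_fun_add hf hg, _root_.add_apply]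

theorem dirD_mul (w1 w2 : ℝ × ℝ → ℝ) (hf : DifferentiableAt ℝ f y) (hg : DifferentiableAt ℝ g y) :
    dirD w1 w2 (fun z => f z * g z) y = dirD w1 w2 f y * g y + f y * dirD w1 w2 g y := by
  rw [dirD_eq_fderiv w1 w2 (hf.fun_mul hg), dirD_eq_fderiv w1 w2 hf, dirD_eq_fderiv w1 w2 hg,
    fderiv_fun_mul hf hg]
  simp only [_root_.add_apply, _root_.smul_apply, smul_eq_mul]
  ring

theorem dirD_of_eq_mul {w1 w2 W1 W2 : ℝ × ℝ → ℝ} (c : ℝ) (hW1 : W1 y = c * w1 y)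
    (hW2 : W2 y = c * w2 y) (f : ℝ × ℝ → ℝ) : dirD W1 W2 f y = c * dirD w1 w2 f y := by
  rw [dirD, dirD, hW1, hW2]
  ring

end DirectionalDerivative

section Transformation

variable {h1 h2 : ℝ → ℝ}

theorem sq_mul_deriv_div_comm {x : ℝ} (hd1 : DifferentiableAt ℝ h1 x)
    (hd2 : DifferentiableAt ℝ h2 x) (hx1 : h1 x ≠ 0) (hx2 : h2 x ≠ 0) :
    h1 x ^ 2 * deriv (fun x => h2 x / h1 x) x = -(h2 x ^ 2 * deriv (fun x => h1 x / h2 x) x) := by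
  rw [deriv_fun_div hd2 hd1 hx1, deriv_fun_div hd1 hd2 hx2]
  field_simp
  ring

theorem smul_Jinv_eq_smul_R {x : ℝ} (hd1 : DifferentiableAt ℝ h1 x)
    (hd2 : DifferentiableAt ℝ h2 x) (hx1 : h1 x ≠ 0) (hx2 : h2 x ≠ 0) (c : ℝ) :
    h1 x • !![1, 0; c * h1 x * deriv (fun x => h2 x / h1 x) x, h2 x / h1 x]
      = h2 x • !![h1 x / h2 x, 0; -c * h2 x * deriv (fun x => h1 x / h2 x) x, 1] := by
  have key := sq_mul_deriv_div_comm hd1 hd2 hx1 hx2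
  ext i j
  fin_cases i <;> fin_cases j <;>
    simp only [Fin.zero_eta, Fin.mk_one, Matrix.smul_apply, of_apply, cons_val_zero, cons_val_one,
      smul_eq_mul]
  · field_simp
  · ring
  · linear_combination c * key
  · field_simp

theorem dirD_FuRu {u1 u2 : ℝ × ℝ → ℝ} {y : ℝ × ℝ} (hd1 : DifferentiableAt ℝ h1 y.1)
    (hd2 : DifferentiableAt ℝ h2 y.1) (hy1 : h1 y.1 ≠ 0) (hy2 : h2 y.1 ≠ 0) (f : ℝ × ℝ → ℝ) :
    dirD (FuFst (RuFst h1 h2 u1)) (FuSnd h2 (RuFst h1 h2 u1) (RuSnd h1 h2 u1 u2)) f y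
      = h1 y.1 / h2 y.1 * dirD (FuFst u1) (FuSnd h1 u1 u2) f y := by
  refine dirD_of_eq_mul _ ?_ ?_ f
  · simp only [FuFst, RuFst]
    ring
  · simp only [FuSnd, RuFst, RuSnd]
    rw [deriv_fun_div hd1 hd2 hy2]
    field_simp
    ring

theorem dirD_RuSnd {u1 u2 : ℝ × ℝ → ℝ} {y : ℝ × ℝ} (W1 W2 : ℝ × ℝ → ℝ)
    (hR : DifferentiableAt ℝ (fun z => -z.2 * h2 z.1 * deriv (fun x => h1 x / h2 x) z.1) y)
    (hu1 : DifferentiableAt ℝ u1 y) (hu2 : DifferentiableAt ℝ u2 y) :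
    dirD W1 W2 (RuSnd h1 h2 u1 u2) y
      = dirD W1 W2 (fun z => -z.2 * h2 z.1 * deriv (fun x => h1 x / h2 x) z.1) y * u1 y
        + -y.2 * h2 y.1 * deriv (fun x => h1 x / h2 x) y.1 * dirD W1 W2 u1 y
        + dirD W1 W2 u2 y := by
  have hRu : RuSnd h1 h2 u1 u2
      = fun z => -z.2 * h2 z.1 * deriv (fun x => h1 x / h2 x) z.1 * u1 z + u2 z := by
    funext z
    simp only [RuSnd]
    ring
  rw [hRu, dirD_add W1 W2 (hR.fun_mul hu1) hu2, dirD_mul W1 W2 hR hu1]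

theorem dirD_Ru {u1 u2 : ℝ × ℝ → ℝ} {y : ℝ × ℝ} (W1 W2 : ℝ × ℝ → ℝ)
    (hq : DifferentiableAt ℝ (fun z => h1 z.1 / h2 z.1) y)
    (hR : DifferentiableAt ℝ (fun z => -z.2 * h2 z.1 * deriv (fun x => h1 x / h2 x) z.1) y)
    (hu1 : DifferentiableAt ℝ u1 y) (hu2 : DifferentiableAt ℝ u2 y) :
    ![dirD W1 W2 (RuFst h1 h2 u1) y, dirD W1 W2 (RuSnd h1 h2 u1 u2) y]
      = !![dirD W1 W2 (fun z => h1 z.1 / h2 z.1) y, dirD W1 W2 (fun _ => (0:ℝ)) y;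
           dirD W1 W2 (fun z => -z.2 * h2 z.1 * deriv (fun x => h1 x / h2 x) z.1) y,
           dirD W1 W2 (fun _ => (1:ℝ)) y] *ᵥ ![u1 y, u2 y]
        + !![h1 y.1 / h2 y.1, 0; -y.2 * h2 y.1 * deriv (fun x => h1 x / h2 x) y.1, 1]
          *ᵥ ![dirD W1 W2 u1 y, dirD W1 W2 u2 y] := by
  have hFst : dirD W1 W2 (RuFst h1 h2 u1) y
      = dirD W1 W2 (fun z => h1 z.1 / h2 z.1) y * u1 y + h1 y.1 / h2 y.1 * dirD W1 W2 u1 y :=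
    dirD_mul W1 W2 hq hu1
  rw [mulVec_fin_two, mulVec_fin_two, vec2_add]
  refine vec2_eq ?_ ?_ <;>
    simp only [of_apply, cons_val_zero, cons_val_one, dirD_const, hFst,
      dirD_RuSnd W1 W2 hR hu1 hu2] <;>
    ring

end Transformation

theorem smul_mul_transpose_mul_mulVec_dotProduct {n : Type*} [Fintype n]
    {R J : Matrix n n ℝ} {a b : ℝ} (hJ : a • J = b • R) (v ψ : n → ℝ) :
    a * ((Rᵀ * J) *ᵥ v ⬝ᵥ ψ) = b * (R *ᵥ v ⬝ᵥ R *ᵥ ψ) := by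
  rw [← mulVec_mulVec, mulVec_transpose, ← dotProduct_mulVec, dotProduct_comm, ← smul_eq_mul,
    ← dotProduct_smul, ← smul_mulVec, hJ, smul_mulVec, dotProduct_smul, smul_eq_mul,
    dotProduct_comm]

theorem convective_transform_general
    (h1 h2 : ℝ → ℝ) (u1 u2 p1 p2 : ℝ × ℝ → ℝ) (s : Set (ℝ × ℝ)) (hs : IsOpen s)
    (h1pos : ∀ x, 0 < h1 x) (h2pos : ∀ x, 0 < h2 x)
    (h1c : ContDiff ℝ 2 h1) (h2c : ContDiff ℝ 2 h2)
    (hu1 : ContDiffOn ℝ 1 u1 s) (hu2 : ContDiffOn ℝ 1 u2 s) :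
    ∀ y ∈ s,
      let R : Matrix (Fin 2) (Fin 2) ℝ :=
        !![h1 y.1 / h2 y.1, 0;
           -y.2 * h2 y.1 * deriv (fun x => h1 x / h2 x) y.1, 1]
      let Jinv : Matrix (Fin 2) (Fin 2) ℝ :=
        !![1, 0; y.2 * h1 y.1 * deriv (fun x => h2 x / h1 x) y.1, h2 y.1 / h1 y.1]
      -- the vector field `w = F_{h¹}u`
      let w1 := FuFst u1
      let w2 := FuSnd h1 u1 u2
      -- the vector field `W = F_{h²}(Ru)`
      let W1 := FuFst (RuFst h1 h2 u1)
      let W2 := FuSnd h2 (RuFst h1 h2 u1) (RuSnd h1 h2 u1 u2)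
      -- `((F_{h²}Ru)·∇)R`, entrywise directional derivative of `R`
      let DR : Matrix (Fin 2) (Fin 2) ℝ :=
        !![dirD W1 W2 (fun z => h1 z.1 / h2 z.1) y, dirD W1 W2 (fun _ => (0:ℝ)) y;
           dirD W1 W2 (fun z => -z.2 * h2 z.1 * deriv (fun x => h1 x / h2 x) z.1) y,
           dirD W1 W2 (fun _ => (1:ℝ)) y]
      -- `Rψ` at `y`
      let Rpsi : Fin 2 → ℝ :=
        ![h1 y.1 / h2 y.1 * p1 y,
          p2 y - y.2 * h2 y.1 * deriv (fun x => h1 x / h2 x) y.1 * p1 y]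
      h1 y.1 *
          ((Rᵀ * Jinv).mulVec ![dirD w1 w2 u1 y, dirD w1 w2 u2 y] ⬝ᵥ ![p1 y, p2 y])
        = (h2 y.1) ^ 2 / h1 y.1 *
            (![dirD W1 W2 (RuFst h1 h2 u1) y, dirD W1 W2 (RuSnd h1 h2 u1 u2) y] ⬝ᵥ Rpsi)
          - (h2 y.1) ^ 2 / h1 y.1 * (DR.mulVec ![u1 y, u2 y] ⬝ᵥ Rpsi) := by
  intro y hy R Jinv w1 w2 W1 W2 DR Rpsi
  have hy1 := (h1pos y.1).ne'
  have hy2 := (h2pos y.1).ne'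
  have hd1 : Differentiable ℝ h1 := h1c.differentiable two_ne_zero
  have hd2 : Differentiable ℝ h2 := h2c.differentiable two_ne_zero
  have hqc : ContDiff ℝ 2 (fun x => h1 x / h2 x) := h1c.div h2c fun x => (h2pos x).ne'
  have hqd := hqc.differentiable two_ne_zero
  have hq'd := hqc.differentiable_deriv_two
  have hu1y := (hu1.differentiableOn one_ne_zero).differentiableAt (hs.mem_nhds hy)
  have hu2y := (hu2.differentiableOn one_ne_zero).differentiableAt (hs.mem_nhds hy)
  have hRy : DifferentiableAt ℝ
      (fun z : ℝ × ℝ => -z.2 * h2 z.1 * deriv (fun x => h1 x / h2 x) z.1) y := by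
    fun_prop
  have hRpsi : Rpsi = R *ᵥ ![p1 y, p2 y] := by
    rw [mulVec_fin_two]
    refine vec2_eq ?_ ?_ <;> simp only [R, of_apply, cons_val_zero, cons_val_one] <;>
      ring
  have hLeibniz : ![dirD W1 W2 (RuFst h1 h2 u1) y, dirD W1 W2 (RuSnd h1 h2 u1 u2) y]
      = DR *ᵥ ![u1 y, u2 y] + R *ᵥ ![dirD W1 W2 u1 y, dirD W1 W2 u2 y] :=
    dirD_Ru W1 W2 ((hqd y.1).comp y differentiableAt_fst) hRy hu1y hu2y
  have hW : ![dirD W1 W2 u1 y, dirD W1 W2 u2 y]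
      = (h1 y.1 / h2 y.1) • ![dirD w1 w2 u1 y, dirD w1 w2 u2 y] := by
    rw [smul_vec2, dirD_FuRu (hd1 y.1) (hd2 y.1) hy1 hy2, dirD_FuRu (hd1 y.1) (hd2 y.1) hy1 hy2,
      smul_eq_mul, smul_eq_mul]
  have hJ : h1 y.1 • Jinv = h2 y.1 • R := smul_Jinv_eq_smul_R (hd1 y.1) (hd2 y.1) hy1 hy2 y.2
  rw [hLeibniz, hW, hRpsi, add_dotProduct, mul_add, add_sub_cancel_left, mulVec_smul,
    smul_dotProduct, smul_eq_mul, smul_mul_transpose_mul_mulVec_dotProduct hJ]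
  field_simp

/-- pointwise transformation identity for the convective term:
`h¹·(Rᵀ𝕁⁻¹·((F_{h¹}u)·∇)u)·ψ
  = ((h²)²/h¹)·(((F_{h²}Ru)·∇)(Ru))·(Rψ) − ((h²)²/h¹)·((((F_{h²}Ru)·∇)R)·u)·(Rψ)`. -/
theorem convective_transform
    (h1 h2 : ℝ → ℝ) (u1 u2 p1 p2 : ℝ × ℝ → ℝ) (s : Set (ℝ × ℝ)) (hs : IsOpen s)
    (h1pos : ∀ x, 0 < h1 x) (h2pos : ∀ x, 0 < h2 x)
    (h1c : ContDiff ℝ 2 h1) (h2c : ContDiff ℝ 2 h2)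
    (hu1 : ContDiffOn ℝ 1 u1 s) (hu2 : ContDiffOn ℝ 1 u2 s)
    (hp1 : ContDiffOn ℝ 1 p1 s) (hp2 : ContDiffOn ℝ 1 p2 s) :
    ∀ y ∈ s,
      let R : Matrix (Fin 2) (Fin 2) ℝ :=
        !![h1 y.1 / h2 y.1, 0;
           -y.2 * h2 y.1 * deriv (fun x => h1 x / h2 x) y.1, 1]
      let Jinv : Matrix (Fin 2) (Fin 2) ℝ :=
        !![1, 0; y.2 * h1 y.1 * deriv (fun x => h2 x / h1 x) y.1, h2 y.1 / h1 y.1]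
      -- the vector field `w = F_{h¹}u`
      let w1 := FuFst u1
      let w2 := FuSnd h1 u1 u2
      -- the vector field `W = F_{h²}(Ru)`
      let W1 := FuFst (RuFst h1 h2 u1)
      let W2 := FuSnd h2 (RuFst h1 h2 u1) (RuSnd h1 h2 u1 u2)
      -- `((F_{h²}Ru)·∇)R`, entrywise directional derivative of `R`
      let DR : Matrix (Fin 2) (Fin 2) ℝ :=
        !![dirD W1 W2 (fun z => h1 z.1 / h2 z.1) y, dirD W1 W2 (fun _ => (0:ℝ)) y;
           dirD W1 W2 (fun z => -z.2 * h2 z.1 * deriv (fun x => h1 x / h2 x) z.1) y,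
           dirD W1 W2 (fun _ => (1:ℝ)) y]
      -- `Rψ` at `y`
      let Rpsi : Fin 2 → ℝ :=
        ![h1 y.1 / h2 y.1 * p1 y,
          p2 y - y.2 * h2 y.1 * deriv (fun x => h1 x / h2 x) y.1 * p1 y]
      h1 y.1 *
          ((Rᵀ * Jinv).mulVec ![dirD w1 w2 u1 y, dirD w1 w2 u2 y] ⬝ᵥ ![p1 y, p2 y])
        = (h2 y.1) ^ 2 / h1 y.1 *
            (![dirD W1 W2 (RuFst h1 h2 u1) y, dirD W1 W2 (RuSnd h1 h2 u1 u2) y] ⬝ᵥ Rpsi)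
          - (h2 y.1) ^ 2 / h1 y.1 * (DR.mulVec ![u1 y, u2 y] ⬝ᵥ Rpsi) :=
  convective_transform_general h1 h2 u1 u2 p1 p2 s hs h1pos h2pos h1c h2c hu1 hu2
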